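/- arXiv:math-ph/0211078 — 6 statements merged into one kernel-verified Lean document; each statement's English description precedes it below -/
import Mathlib

section
/- Let φ be a linear automorphism of a Lorentzian vector space. Then φ maps future-directed causal vectors to future-directed causal vectors if and only if the pulled-back bilinear form B(u,v) := g(φ(u), φ(v)) satisfies B(u,v) ≥ 0 for all future-directed causal vectors u, v, and additionally g(u₀, φ(u₀)) > 0. -/
open LinearMap (BilinForm)

variable {V : Type*} [AddCommGroup V] [Module ℝ V]

/-- `v` is a future-directed causal vector w.r.t. metric `g` and time orientation `u₀`. -/
def FD (g : BilinForm ℝ V) (u₀ v : V) : Prop :=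
  0 ≤ g v v ∧ v ≠ 0 ∧ 0 < g u₀ v

/-- `k` is a future-directed null vector. -/
def FDNull (g : BilinForm ℝ V) (u₀ k : V) : Prop :=
  g k k = 0 ∧ k ≠ 0 ∧ 0 < g u₀ k

/-- `g` is Lorentzian with signature `(+,-,…,-)` and time orientation given by the
timelike vector `u₀`: `g` is symmetric, `u₀` is timelike, and `g` is negative definite
on the orthogonal complement of `u₀`. -/
def IsLorentzian (g : BilinForm ℝ V) (u₀ : V) : Prop :=
  g.IsSymm ∧ 0 < g u₀ u₀ ∧ ∀ v, v ≠ 0 → g u₀ v = 0 → g v v < 0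

/-- A map is causal if it sends future-directed causal vectors to
future-directed causal vectors. -/
def CausalMap (g : BilinForm ℝ V) (u₀ : V) (φ : V → V) : Prop :=
  ∀ v, FD g u₀ v → FD g u₀ (φ v)

/-- A causal vector is not orthogonal to `u₀`. -/
lemma causal_not_orth (g : BilinForm ℝ V) (u₀ : V) (hL : IsLorentzian g u₀)
    {w : V} (hw : 0 ≤ g w w) (hw0 : w ≠ 0) : g u₀ w ≠ 0 :=
  fun h => absurd (hL.2.2 w hw0 h) (not_lt.2 hw)

/-- Any vector orthogonal to `u₀` has nonpositive norm. -/
lemma orth_nonpos (g : BilinForm ℝ V) (u₀ : V) (hL : IsLorentzian g u₀)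
    {w : V} (hw : g u₀ w = 0) : g w w ≤ 0 := by
  rcases eq_or_ne w 0 with rfl | h
  · simp
  · exact le_of_lt (hL.2.2 w h hw)

set_option maxHeartbeats 1000000 in
/-- Two future-directed causal vectors have nonnegative pairing. -/
lemma fd_pairing_nonneg (g : BilinForm ℝ V) (u₀ : V) (hL : IsLorentzian g u₀)
    {u v : V} (hu : FD g u₀ u) (hv : FD g u₀ v) : 0 ≤ g u v := by
  have hsymm : ∀ x y, g x y = g y x := fun x y => hL.1.eq x y
  have hc : 0 < g u₀ u₀ := hL.2.1
  have hcne : g u₀ u₀ ≠ 0 := ne_of_gt hc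
  obtain ⟨huu, -, hu0⟩ := hu
  obtain ⟨hvv, -, hv0⟩ := hv
  set α : ℝ := g u₀ u / g u₀ u₀ with hα
  set β : ℝ := g u₀ v / g u₀ u₀ with hβ
  have hαpos : 0 < α := div_pos hu0 hc
  have hβpos : 0 < β := div_pos hv0 hc
  have hαc : g u₀ u = α * g u₀ u₀ := by rw [hα]; field_simp
  have hβc : g u₀ v = β * g u₀ u₀ := by rw [hβ]; field_simp
  obtain ⟨U, hU⟩ : ∃ w, w = u - α • u₀ := ⟨_, rfl⟩
  obtain ⟨W, hW⟩ : ∃ w, w = v - β • u₀ := ⟨_, rfl⟩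
  have keyO : ∀ (x : V) (a : ℝ), g u₀ (x - a • u₀) = g u₀ x - a * g u₀ u₀ := by
    intro x a; simp [map_sub, map_smul]
  have key : ∀ (x y : V) (a b : ℝ),
      g (x - a • u₀) (y - b • u₀)
        = g x y - b * g x u₀ - a * g u₀ y + a * b * g u₀ u₀ := by
    intro x y a b; simp [map_sub, map_smul]; ring
  have hUo : g u₀ U = 0 := by rw [hU, keyO, hαc]; ring
  have hWo : g u₀ W = 0 := by rw [hW, keyO, hβc]; ring
  have hUU : g U U = g u u - α * α * g u₀ u₀ := by
    rw [hU, key, hsymm u u₀, hαc]; ring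
  have hWW : g W W = g v v - β * β * g u₀ u₀ := by
    rw [hW, key, hsymm v u₀, hβc]; ring
  have hUW : g U W = g u v - α * β * g u₀ u₀ := by
    rw [hU, hW, key, hsymm u u₀, hαc, hβc]; ring
  -- Cauchy-Schwarz via discriminant on the orthogonal complement
  have hquad : ∀ t : ℝ, g W W * (t * t) + (2 * g U W) * t + g U U ≤ 0 := by
    intro t
    have horth : g u₀ (U + t • W) = 0 := by
      simp [map_add, map_smul, hUo, hWo]
    have h1 := orth_nonpos g u₀ hL horth
    have hexp : g (U + t • W) (U + t • W)
        = g U U + t * g U W + t * g W U + t * t * g W W := by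
      simp [map_add, map_smul]; ring
    rw [hexp, hsymm W U] at h1
    nlinarith [h1]
  have hd := discrim_le_zero_of_nonpos hquad
  rw [discrim] at hd
  -- bounds
  have hpU : -(g U U) ≤ α * α * g u₀ u₀ := by nlinarith [hUU, huu]
  have hpW : -(g W W) ≤ β * β * g u₀ u₀ := by nlinarith [hWW, hvv]
  have hUUn : g U U ≤ 0 := orth_nonpos g u₀ hL hUo
  have hWWn : g W W ≤ 0 := orth_nonpos g u₀ hL hWo
  have hCS : (g U W) * (g U W) ≤ (-(g U U)) * (-(g W W)) := by nlinarith [hd]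
  have hbound : (g U W) * (g U W) ≤ (α * β * g u₀ u₀) * (α * β * g u₀ u₀) := by
    calc (g U W) * (g U W) ≤ (-(g U U)) * (-(g W W)) := hCS
    _ ≤ (α * α * g u₀ u₀) * (β * β * g u₀ u₀) :=
        mul_le_mul hpU hpW (by linarith) (by positivity)
    _ = (α * β * g u₀ u₀) * (α * β * g u₀ u₀) := by ring
  have habc : 0 ≤ α * β * g u₀ u₀ := by positivity
  nlinarith [hbound, habc, hUW]

set_option maxHeartbeats 1000000 in
/-- a linear automorphism is causal iff the pulled-back metric is a
rank-2 causal tensor and `φ` is orthochronous. -/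
theorem causal_iff_pullback_causal [FiniteDimensional ℝ V]
    (g : BilinForm ℝ V) (u₀ : V) (hL : IsLorentzian g u₀) (φ : V ≃ₗ[ℝ] V) :
    CausalMap g u₀ φ ↔
      ((∀ u v, FD g u₀ u → FD g u₀ v → 0 ≤ g (φ u) (φ v)) ∧
        0 < g u₀ (φ u₀)) := by
  have hc : 0 < g u₀ u₀ := hL.2.1
  have hu₀ne : u₀ ≠ 0 := by
    intro h; rw [h] at hc; simp at hc
  have hFDu₀ : FD g u₀ u₀ := ⟨le_of_lt hc, hu₀ne, hc⟩
  constructor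
  · intro hcm
    refine ⟨fun u v hu hv => fd_pairing_nonneg g u₀ hL (hcm u hu) (hcm v hv),
      (hcm u₀ hFDu₀).2.2⟩
  · rintro ⟨hB, hA⟩
    intro v hv
    obtain ⟨hvv, hvne, hv0⟩ := hv
    have hφvv : 0 ≤ g (φ v) (φ v) := hB v v ⟨hvv, hvne, hv0⟩ ⟨hvv, hvne, hv0⟩
    have hφvne : φ v ≠ 0 := by
      simp only [ne_eq, LinearEquiv.map_eq_zero_iff]
      exact hvne
    refine ⟨hφvv, hφvne, ?_⟩
    have hne : g u₀ (φ v) ≠ 0 := causal_not_orth g u₀ hL hφvv hφvne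
    rcases lt_or_gt_of_ne hne with hneg | hpos
    · exfalso
      have hBneg : (0:ℝ) < -(g u₀ (φ v)) := by linarith
      set s := g u₀ (φ u₀) / (-(g u₀ (φ v))) with hs
      have hspos : 0 < s := div_pos hA hBneg
      set w := u₀ + s • v with hw
      have hgw : 0 < g u₀ w := by
        have h : g u₀ w = g u₀ u₀ + s * g u₀ v := by simp [hw, map_add, map_smul]
        rw [h]; positivity
      have hww : 0 ≤ g w w := by
        have h1 : g v u₀ = g u₀ v := hL.1.eq v u₀
        have h : g w w = g u₀ u₀ + s * g u₀ v + s * g v u₀ + s * s * g v v := by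
          simp [hw, map_add, map_smul]; ring
        rw [h, h1]
        nlinarith [hspos, hv0, hvv, hc]
      have hwne : w ≠ 0 := by
        intro h; rw [h] at hgw; simp at hgw
      have hFDw : FD g u₀ w := ⟨hww, hwne, hgw⟩
      have hφww : 0 ≤ g (φ w) (φ w) := hB w w hFDw hFDw
      have hφwne : φ w ≠ 0 := by
        simp only [ne_eq, LinearEquiv.map_eq_zero_iff]; exact hwne
      have hkey : g u₀ (φ w) ≠ 0 := causal_not_orth g u₀ hL hφww hφwne
      apply hkey
      have hφw : φ w = φ u₀ + s • φ v := by simp [hw, map_add, map_smul]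
      rw [hφw]
      simp only [map_add, map_smul, smul_eq_mul]
      rw [hs]
      field_simp
      ring
    · exact hpos
end

section
/- If T is a rank-2 causal tensor (T(u,v) ≥ 0 for all future-directed causal u,v) on a Lorentzian vector space, then every vector k with T(k,k) = 0 that is future-directed causal must be null, i.e., g(k,k) = 0. -/
open LinearMap (BilinForm)

variable {V : Type*} [AddCommGroup V] [Module ℝ V]

lemma exists_big (a d b c : ℝ) (ha : 0 < a) (hd : 0 < d) :
    ∃ M : ℝ, 0 < M ∧ b ≤ M * a ∧ c < M * d := by
  refine ⟨max (max (b / a) (c / d)) 0 + 1, by positivity, ?_, ?_⟩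
  · have h1 : b / a ≤ max (max (b / a) (c / d)) 0 + 1 := by
      have := le_max_left (b / a) (c / d)
      have := le_max_left (max (b / a) (c / d)) (0 : ℝ)
      linarith
    calc b = (b / a) * a := by field_simp
    _ ≤ _ := by nlinarith
  · have h1 : c / d < max (max (b / a) (c / d)) 0 + 1 := by
      have := le_max_right (b / a) (c / d)
      have := le_max_left (max (b / a) (c / d)) (0 : ℝ)
      linarith
    calc c = (c / d) * d := by field_simp
    _ < _ := by nlinarith


/-- a future-directed causal vector annihilating a (nontrivial)
rank-2 causal tensor must be null. -/
theorem canonical_direction_is_null [FiniteDimensional ℝ V]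
    (g T : BilinForm ℝ V) (u₀ : V) (hL : IsLorentzian g u₀)
    (hTsymm : T.IsSymm)
    (hT : ∀ u v, FD g u₀ u → FD g u₀ v → 0 ≤ T u v)
    (w : V) (hw : 0 < g w w) (hwfd : 0 < g u₀ w) (hTw : 0 < T w w)
    (k : V) (hk : FD g u₀ k) (hTk : T k k = 0) :
    g k k = 0 := by
  by_contra hne
  obtain ⟨hk0, hkne, hku⟩ := hk
  have hkk : 0 < g k k := lt_of_le_of_ne hk0 (Ne.symm hne)
  have hwne : w ≠ 0 := by rintro rfl; simp at hwfd
  have hwFD : FD g u₀ w := ⟨le_of_lt hw, hwne, hwfd⟩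
  -- choose M so that M•k - w is FD
  obtain ⟨M, hM0, hM1, hM2⟩ :=
    exists_big (g k k) (g u₀ k) (g k w + g w k) (g u₀ w) hkk hku
  have hMu : 0 < g u₀ (M • k - w) := by
    simp only [map_sub, map_smul, smul_eq_mul]
    linarith
  have hMFD : FD g u₀ (M • k - w) := by
    refine ⟨?_, ?_, hMu⟩
    · simp only [map_sub, map_smul, LinearMap.sub_apply, LinearMap.smul_apply, smul_eq_mul]
      nlinarith
    · intro h; rw [h] at hMu; simp at hMu
  -- T k w = 0
  have h1 : 0 ≤ T k (M • k - w) := hT _ _ ⟨hk0, hkne, hku⟩ hMFD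
  have h2 : 0 ≤ T k w := hT _ _ ⟨hk0, hkne, hku⟩ hwFD
  have hTkw : T k w = 0 := by
    simp only [map_sub, map_smul, smul_eq_mul, hTk] at h1
    linarith
  have hTwk : T w k = 0 := by
    have : (RingHom.id ℝ) (T k w) = T w k := hTsymm.eq k w
    simp only [RingHom.id_apply] at this
    linarith [this]
  -- choose N so that w + N•k is FD
  obtain ⟨N, hN0, hN1, hN2⟩ :=
    exists_big (g k k) (g u₀ k) (-(g w k + g k w)) 0 hkk hku
  have hNFD : FD g u₀ (w + N • k) := by
    refine ⟨?_, ?_, ?_⟩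
    · simp only [map_add, map_smul, LinearMap.add_apply, LinearMap.smul_apply, smul_eq_mul]
      nlinarith
    · intro h
      have : g u₀ (w + N • k) = 0 := by rw [h]; simp
      simp only [map_add, map_smul, smul_eq_mul] at this
      nlinarith
    · simp only [map_add, map_smul, smul_eq_mul]
      nlinarith
  have h3 : 0 ≤ T (w + N • k) (M • k - w) := hT _ _ hNFD hMFD
  simp only [map_add, map_sub, map_smul, LinearMap.add_apply, LinearMap.sub_apply,
    LinearMap.smul_apply, smul_eq_mul, hTk, hTkw, hTwk] at h3
  nlinarith
end

section
/- A linear automorphism φ of a Lorentzian vector space satisfies both φ and φ⁻¹ are causal maps (sending future-directed causal vectors to future-directed causal vectors) if and only if g(φ(u), φ(v)) = α · g(u,v) for some constant α > 0, i.e., φ is a conformal (orthochronous) transformation. -/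
open LinearMap (BilinForm)

variable {V : Type*} [AddCommGroup V] [Module ℝ V]

lemma perp_nonpos (g : BilinForm ℝ V) (u₀ : V) (hL : IsLorentzian g u₀)
    (v : V) (h : g u₀ v = 0) : g v v ≤ 0 := by
  rcases eq_or_ne v 0 with rfl | hv
  · simp
  · exact (hL.2.2 v hv h).le

lemma cs_perp (g : BilinForm ℝ V) (u₀ : V) (hL : IsLorentzian g u₀)
    (x y : V) (hx : g u₀ x = 0) (hy : g u₀ y = 0) :
    (g x y)^2 ≤ g x x * g y y := by
  rcases eq_or_ne y 0 with rfl | hy0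
  · simp
  have hC : g y y < 0 := hL.2.2 y hy0 hy
  have key : ∀ t : ℝ, g x x + 2*t*(g x y) + t^2 * g y y ≤ 0 := by
    intro t
    have hperp : g u₀ (x + t • y) = 0 := by
      simp [map_add, map_smul, hx, hy]
    have h1 := perp_nonpos g u₀ hL (x + t • y) hperp
    have hsymm : g y x = g x y := hL.1.eq y x
    have hexp : g (x + t • y) (x + t • y)
        = g x x + 2*t*(g x y) + t^2 * g y y := by
      simp [map_add, map_smul, LinearMap.add_apply, LinearMap.smul_apply,
        smul_eq_mul, hsymm]
      ring
    linarith [hexp ▸ h1]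
  have h2 : g x x ≤ (g x y)^2 / (g y y) := by
    have h0 := key (-(g x y)/(g y y))
    have e1 : (-(g x y)/(g y y))^2 * (g y y) = (g x y)^2 / (g y y) := by
      have hne : (g y) y ≠ 0 := ne_of_lt hC
      field_simp
    have e2 : 2*(-(g x y)/(g y y))*(g x y) = -(2*((g x y)^2 / (g y y))) := by
      have hne : (g y) y ≠ 0 := ne_of_lt hC
      field_simp
    rw [e2, e1] at h0
    linarith
  exact (le_div_iff_of_neg hC).mp h2

lemma real_key (Q a b G C A : ℝ) (hQ : 0 < Q) (hb : 0 < b) (ha : a < 0)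
    (hG : 0 < G) (hC : C ≤ 0) (hA : A ≤ 0) (hCgt : 0 < b^2 + C) (hAge : 0 ≤ a^2 + A)
    (hcs : (Q*G - a*b)^2 ≤ C*A) : False := by
  have hab : a*b < 0 := mul_neg_of_neg_of_pos ha hb
  have t1 : 0 ≤ (b^2 + C) * (-A) := mul_nonneg hCgt.le (by linarith)
  have t2 : 0 ≤ b^2*(a^2 + A) := mul_nonneg (sq_nonneg b) hAge
  have t3 : 0 < (Q*G) * (Q*G - 2*(a*b)) :=
    mul_pos (mul_pos hQ hG) (by nlinarith)
  nlinarith [hcs, t1, t2, t3]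

set_option maxHeartbeats 1000000 in
lemma future_of_pos (g : BilinForm ℝ V) (u₀ : V) (hL : IsLorentzian g u₀)
    (w x : V) (hw : 0 < g w w) (hwu : 0 < g u₀ w)
    (hx : 0 ≤ g x x) (hx0 : x ≠ 0) (hwx : 0 < g w x) : 0 < g u₀ x := by
  have hQ : 0 < g u₀ u₀ := hL.2.1
  obtain ⟨Q, hQdef⟩ : ∃ Q, g u₀ u₀ = Q := ⟨_, rfl⟩
  obtain ⟨a, hadef⟩ : ∃ a, g u₀ x = a := ⟨_, rfl⟩
  obtain ⟨b, hbdef⟩ : ∃ b, g u₀ w = b := ⟨_, rfl⟩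
  rw [hQdef] at hQ
  rw [hbdef] at hwu
  have ha0 : a ≠ 0 := by
    intro h
    exact absurd (hL.2.2 x hx0 (hadef.trans h)) (not_lt.mpr hx)
  rw [hadef]
  rcases ha0.lt_or_gt with haneg | hapos
  · exfalso
    obtain ⟨X, hXdef⟩ : ∃ X, X = Q • x - a • u₀ := ⟨_, rfl⟩
    obtain ⟨W, hWdef⟩ : ∃ W, W = Q • w - b • u₀ := ⟨_, rfl⟩
    have hsx : g x u₀ = a := by rw [← hadef]; exact hL.1.eq x u₀
    have hsw : g w u₀ = b := by rw [← hbdef]; exact hL.1.eq w u₀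
    have hXu : g u₀ X = 0 := by
      simp [hXdef, map_sub, map_smul, smul_eq_mul, hadef, hQdef]
      ring
    have hWu : g u₀ W = 0 := by
      simp [hWdef, map_sub, map_smul, smul_eq_mul, hbdef, hQdef]
      ring
    have eWW : g W W = Q*(Q*(g w w) - b^2) := by
      simp [hWdef, map_sub, map_smul, LinearMap.sub_apply, LinearMap.smul_apply,
        smul_eq_mul, hsw, hbdef, hQdef]
      ring
    have eXX : g X X = Q*(Q*(g x x) - a^2) := by
      simp [hXdef, map_sub, map_smul, LinearMap.sub_apply, LinearMap.smul_apply,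
        smul_eq_mul, hsx, hadef, hQdef]
      ring
    have eWX : g W X = Q*(Q*(g w x) - a*b) := by
      simp [hWdef, hXdef, map_sub, map_smul, LinearMap.sub_apply, LinearMap.smul_apply,
        smul_eq_mul, hsw, hadef, hbdef, hQdef]
      ring
    have hcs := cs_perp g u₀ hL W X hWu hXu
    rw [eWW, eXX, eWX] at hcs
    have hQ2 : (0:ℝ) < Q^2 := by positivity
    have e1 : (Q*(Q*(g w x) - a*b))^2 = Q^2 * ((Q*(g w x) - a*b)^2) := by ring
    have e2 : Q*(Q*(g w w) - b^2) * (Q*(Q*(g x x) - a^2))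
        = Q^2 * ((Q*(g w w) - b^2) * (Q*(g x x) - a^2)) := by ring
    rw [e1, e2] at hcs
    have h1 : (Q*(g w x) - a*b)^2 ≤ (Q*(g w w) - b^2) * (Q*(g x x) - a^2) :=
      (mul_le_mul_iff_right₀ hQ2).mp hcs
    have hA : Q*(g x x) - a^2 ≤ 0 := by
      have h2 := perp_nonpos g u₀ hL X hXu
      rw [eXX] at h2
      by_contra hcon
      push_neg at hcon
      nlinarith [mul_pos hQ hcon]
    have hCle : Q*(g w w) - b^2 ≤ 0 := by
      have h2 := perp_nonpos g u₀ hL W hWu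
      rw [eWW] at h2
      by_contra hcon
      push_neg at hcon
      nlinarith [mul_pos hQ hcon]
    have hCgt : 0 < b^2 + (Q*(g w w) - b^2) := by nlinarith [mul_pos hQ hw]
    have hAge : 0 ≤ a^2 + (Q*(g x x) - a^2) := by nlinarith [mul_nonneg hQ.le hx]
    exact real_key Q a b (g w x) _ _ hQ hwu haneg hwx hCle hA hCgt hAge h1
  · exact hapos

lemma u0_FD (g : BilinForm ℝ V) (u₀ : V) (hL : IsLorentzian g u₀) : FD g u₀ u₀ := by
  refine ⟨hL.2.1.le, ?_, hL.2.1⟩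
  intro h
  have h2 := hL.2.1
  rw [h] at h2
  simp at h2

lemma null_preserved (g : BilinForm ℝ V) (u₀ : V) (hL : IsLorentzian g u₀)
    (φ : V ≃ₗ[ℝ] V) (h1 : CausalMap g u₀ φ) (h2 : CausalMap g u₀ φ.symm)
    (v : V) (hv0 : g v v = 0) (hvne : v ≠ 0) (hvf : 0 < g u₀ v) :
    g (φ v) (φ v) = 0 := by
  by_contra hc
  have hQ : 0 < g u₀ u₀ := hL.2.1
  obtain ⟨hφv1, hφv2, hφv3⟩ := h1 v ⟨hv0.ge, hvne, hvf⟩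
  obtain ⟨hd, hu2, he⟩ := h1 u₀ (u0_FD g u₀ hL)
  have hc' : 0 < g (φ v) (φ v) := lt_of_le_of_ne hφv1 (Ne.symm hc)
  obtain ⟨c, hcdef⟩ : ∃ c, g (φ v) (φ v) = c := ⟨_, rfl⟩
  obtain ⟨A, hAdef⟩ : ∃ A, g (φ u₀) (φ v) = A := ⟨_, rfl⟩
  obtain ⟨d, hddef⟩ : ∃ d, g (φ u₀) (φ u₀) = d := ⟨_, rfl⟩
  obtain ⟨e, hedef⟩ : ∃ e, g u₀ (φ u₀) = e := ⟨_, rfl⟩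
  obtain ⟨Q, hQdef⟩ : ∃ Q, g u₀ u₀ = Q := ⟨_, rfl⟩
  rw [hcdef] at hc'
  rw [hddef] at hd
  rw [hedef] at he
  rw [hQdef] at hQ
  set ε := min (min ((g u₀ v)/Q) (c/(2*(|A|+1)))) ((g u₀ (φ v))/(2*e)) with hεdef
  have hεpos : 0 < ε :=
    lt_min (lt_min (div_pos hvf hQ) (div_pos hc' (by positivity))) (div_pos hφv3 (by positivity))
  have hε1 : ε ≤ (g u₀ v)/Q := le_trans (min_le_left _ _) (min_le_left _ _)
  have hε2 : ε ≤ c/(2*(|A|+1)) := le_trans (min_le_left _ _) (min_le_right _ _)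
  have hε3 : ε ≤ (g u₀ (φ v))/(2*e) := min_le_right _ _
  have hε1' : ε * Q ≤ g u₀ v := (le_div_iff₀ hQ).mp hε1
  have hε2' : ε * (2*(|A|+1)) ≤ c := (le_div_iff₀ (by positivity)).mp hε2
  have hε3' : ε * (2*e) ≤ g u₀ (φ v) := (le_div_iff₀ (by positivity)).mp hε3
  have hφx : φ (v - ε • u₀) = φ v - ε • φ u₀ := by
    simp [map_sub, map_smul]
  have hsvA : g (φ v) (φ u₀) = A := by rw [← hAdef]; exact hL.1.eq (φ v) (φ u₀)
  have hφxx : g (φ (v - ε • u₀)) (φ (v - ε • u₀)) = c - 2*ε*A + ε^2*d := by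
    rw [hφx]
    simp [map_sub, map_smul, LinearMap.sub_apply, LinearMap.smul_apply, smul_eq_mul,
      hcdef, hAdef, hddef, hsvA]
    ring
  have hpos : 0 < c - 2*ε*A + ε^2*d := by
    have h2A : A ≤ |A| := le_abs_self A
    nlinarith [sq_nonneg ε, mul_nonneg (sq_nonneg ε) hd, mul_pos hεpos hεpos]
  have hφxne : φ (v - ε • u₀) ≠ 0 := by
    intro h
    rw [h] at hφxx
    simp at hφxx
    linarith
  have hu0φx : 0 < g u₀ (φ (v - ε • u₀)) := by
    rw [hφx]
    have : g u₀ (φ v - ε • φ u₀) = g u₀ (φ v) - ε*e := by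
      simp [map_sub, map_smul, smul_eq_mul, hedef]
    rw [this]
    nlinarith [mul_pos hεpos he]
  have hFD := h2 (φ (v - ε • u₀)) ⟨hφxx ▸ hpos.le, hφxne, hu0φx⟩
  rw [LinearEquiv.symm_apply_apply] at hFD
  obtain ⟨hxx, -, -⟩ := hFD
  have hsv : g v u₀ = g u₀ v := hL.1.eq v u₀
  have hexp : g (v - ε • u₀) (v - ε • u₀) = -(2*ε*(g u₀ v)) + ε^2*Q := by
    simp [map_sub, map_smul, LinearMap.sub_apply, LinearMap.smul_apply, smul_eq_mul,
      hv0, hsv, hQdef]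
    ring
  rw [hexp] at hxx
  nlinarith [mul_pos hεpos hvf, mul_pos hεpos hεpos]

lemma conformal_causal (g : BilinForm ℝ V) (u₀ : V) (hL : IsLorentzian g u₀)
    (φ : V ≃ₗ[ℝ] V) (α : ℝ) (hα : 0 < α)
    (hc : ∀ u v, g (φ u) (φ v) = α * g u v) (h0 : 0 < g u₀ (φ u₀)) :
    CausalMap g u₀ φ := by
  rintro v ⟨h1, h2, h3⟩
  have hφvne : φ v ≠ 0 := by
    intro h
    exact h2 (by simpa using congrArg φ.symm h)
  refine ⟨?_, hφvne, ?_⟩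
  · rw [hc]
    exact mul_nonneg hα.le h1
  · refine future_of_pos g u₀ hL (φ u₀) (φ v) ?_ h0 ?_ hφvne ?_
    · rw [hc]; exact mul_pos hα hL.2.1
    · rw [hc]; exact mul_nonneg hα.le h1
    · rw [hc]; exact mul_pos hα h3

lemma norm_perp (g : BilinForm ℝ V) (u₀ : V) (hL : IsLorentzian g u₀)
    (φ : V ≃ₗ[ℝ] V) (h1 : CausalMap g u₀ φ) (h2 : CausalMap g u₀ φ.symm)
    (w : V) (hwu : g u₀ w = 0) (hww : g w w = -(g u₀ u₀)) :
    g (φ u₀) (φ w) = 0 ∧ g (φ w) (φ w) = -(g (φ u₀) (φ u₀)) := by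
  have hQ : 0 < g u₀ u₀ := hL.2.1
  have hswu : g w u₀ = 0 := (hL.1.eq w u₀).trans hwu
  have hk1 : g (u₀ + w) (u₀ + w) = 0 := by
    simp [map_add, LinearMap.add_apply, hwu, hswu, hww]
  have hk2 : g (u₀ - w) (u₀ - w) = 0 := by
    simp [map_sub, LinearMap.sub_apply, hwu, hswu, hww]
  have hk1u : g u₀ (u₀ + w) = g u₀ u₀ := by simp [map_add, hwu]
  have hk2u : g u₀ (u₀ - w) = g u₀ u₀ := by simp [map_sub, hwu]
  have hk1ne : u₀ + w ≠ 0 := by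
    intro h
    rw [h] at hk1u
    simp at hk1u
    exact absurd hk1u.symm (ne_of_gt hQ)
  have hk2ne : u₀ - w ≠ 0 := by
    intro h
    rw [h] at hk2u
    simp at hk2u
    exact absurd hk2u.symm (ne_of_gt hQ)
  have n1 := null_preserved g u₀ hL φ h1 h2 _ hk1 hk1ne (by rw [hk1u]; exact hQ)
  have n2 := null_preserved g u₀ hL φ h1 h2 _ hk2 hk2ne (by rw [hk2u]; exact hQ)
  have hBs : g (φ w) (φ u₀) = g (φ u₀) (φ w) := hL.1.eq _ _
  rw [map_add] at n1
  rw [map_sub] at n2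
  simp only [map_add, map_sub, LinearMap.add_apply, LinearMap.sub_apply] at n1 n2
  constructor <;> linarith

lemma perp_conf (g : BilinForm ℝ V) (u₀ : V) (hL : IsLorentzian g u₀)
    (φ : V ≃ₗ[ℝ] V) (h1 : CausalMap g u₀ φ) (h2 : CausalMap g u₀ φ.symm)
    (w : V) (hwu : g u₀ w = 0) :
    g (φ u₀) (φ w) = 0 ∧
      g (φ w) (φ w) = (g (φ u₀) (φ u₀) / g u₀ u₀) * g w w := by
  have hQ : 0 < g u₀ u₀ := hL.2.1
  rcases eq_or_ne w 0 with rfl | hwne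
  · simp
  · have hs : 0 < -(g w w) := by linarith [hL.2.2 w hwne hwu]
    obtain ⟨s, hsdef⟩ : ∃ s, -(g w w) = s := ⟨_, rfl⟩
    rw [hsdef] at hs
    have hgww : g w w = -s := by linarith [hsdef]
    set t := Real.sqrt ((g u₀ u₀)/s) with htdef
    have ht2 : t^2 = (g u₀ u₀)/s := Real.sq_sqrt (by positivity)
    have htpos : 0 < t := Real.sqrt_pos.mpr (by positivity)
    have hwu' : g u₀ (t • w) = 0 := by simp [map_smul, hwu]
    have hww' : g (t • w) (t • w) = -(g u₀ u₀) := by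
      have e : g (t • w) (t • w) = t^2 * g w w := by
        simp [map_smul, LinearMap.smul_apply, smul_eq_mul]
        ring
      rw [e, ht2, hgww]
      field_simp
    obtain ⟨e1, e2⟩ := norm_perp g u₀ hL φ h1 h2 (t • w) hwu' hww'
    rw [map_smul] at e1 e2
    simp only [map_smul, LinearMap.smul_apply, smul_eq_mul] at e1 e2
    constructor
    · rcases mul_eq_zero.mp e1 with h | h
      · exact absurd h (ne_of_gt htpos)
      · exact h
    · have e3 : t^2 * g (φ w) (φ w) = -(g (φ u₀) (φ u₀)) := by
        rw [← e2]; ring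
      rw [ht2] at e3
      rw [hgww]
      have hsne : s ≠ 0 := ne_of_gt hs
      have hQne : g u₀ u₀ ≠ 0 := ne_of_gt hQ
      field_simp at e3 ⊢
      linarith

lemma cross_conf (g : BilinForm ℝ V) (u₀ : V) (hL : IsLorentzian g u₀)
    (φ : V ≃ₗ[ℝ] V) (h1 : CausalMap g u₀ φ) (h2 : CausalMap g u₀ φ.symm)
    (w₁ w₂ : V) (p1 : g u₀ w₁ = 0) (p2 : g u₀ w₂ = 0) :
    g (φ w₁) (φ w₂) = (g (φ u₀) (φ u₀) / g u₀ u₀) * g w₁ w₂ := by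
  have hsum := (perp_conf g u₀ hL φ h1 h2 (w₁ + w₂) (by simp [map_add, p1, p2])).2
  have h11 := (perp_conf g u₀ hL φ h1 h2 w₁ p1).2
  have h22 := (perp_conf g u₀ hL φ h1 h2 w₂ p2).2
  have hBs : g (φ w₂) (φ w₁) = g (φ w₁) (φ w₂) := hL.1.eq _ _
  have hgs : g w₂ w₁ = g w₁ w₂ := hL.1.eq _ _
  rw [map_add] at hsum
  simp only [map_add, LinearMap.add_apply] at hsum
  rw [hBs, hgs] at hsum
  rw [h11, h22] at hsum
  linarith [hsum]

/-- `φ` and `φ⁻¹` are both causal iff `φ` is an orthochronous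
conformal transformation. -/
theorem causal_with_causal_inverse_iff_conformal [FiniteDimensional ℝ V]
    (hdim : 2 ≤ Module.finrank ℝ V)
    (g : BilinForm ℝ V) (u₀ : V) (hL : IsLorentzian g u₀) (φ : V ≃ₗ[ℝ] V) :
    (CausalMap g u₀ φ ∧ CausalMap g u₀ φ.symm) ↔
      ((∃ α : ℝ, 0 < α ∧ ∀ u v, g (φ u) (φ v) = α * g u v) ∧
        0 < g u₀ (φ u₀)) := by
  have hQ : 0 < g u₀ u₀ := hL.2.1
  constructor
  · rintro ⟨h1, h2⟩
    obtain ⟨hd0, hune, h0⟩ := h1 u₀ (u0_FD g u₀ hL)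
    have h1' : CausalMap g u₀ ⇑φ.symm.symm := by
      rw [LinearEquiv.symm_symm]; exact h1
    have hdpos : 0 < g (φ u₀) (φ u₀) := by
      rcases hd0.lt_or_eq with h | h
      · exact h
      · exfalso
        have hnull := null_preserved g u₀ hL φ.symm h2 h1' (φ u₀) h.symm hune h0
        rw [LinearEquiv.symm_apply_apply] at hnull
        exact absurd hnull (ne_of_gt hQ)
    refine ⟨⟨g (φ u₀) (φ u₀) / g u₀ u₀, div_pos hdpos hQ, ?_⟩, h0⟩
    intro u v
    obtain ⟨u', hu'⟩ : ∃ u', u - (g u₀ u / g u₀ u₀) • u₀ = u' := ⟨_, rfl⟩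
    obtain ⟨v', hv'⟩ : ∃ v', v - (g u₀ v / g u₀ u₀) • u₀ = v' := ⟨_, rfl⟩
    obtain ⟨a, hadef⟩ : ∃ a, g u₀ u / g u₀ u₀ = a := ⟨_, rfl⟩
    obtain ⟨b, hbdef⟩ : ∃ b, g u₀ v / g u₀ u₀ = b := ⟨_, rfl⟩
    rw [hadef] at hu'
    rw [hbdef] at hv'
    have hu : u = a • u₀ + u' := by rw [← hu']; abel
    have hv : v = b • u₀ + v' := by rw [← hv']; abel
    have hpu : g u₀ u' = 0 := by
      rw [← hu']
      simp only [map_sub, map_smul, smul_eq_mul]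
      rw [← hadef]
      field_simp
      ring
    have hpv : g u₀ v' = 0 := by
      rw [← hv']
      simp only [map_sub, map_smul, smul_eq_mul]
      rw [← hbdef]
      field_simp
      ring
    have c1 := (perp_conf g u₀ hL φ h1 h2 v' hpv).1
    have c2 : g (φ u') (φ u₀) = 0 := by
      have hx : g (φ u') (φ u₀) = g (φ u₀) (φ u') := hL.1.eq _ _
      rw [hx]
      exact (perp_conf g u₀ hL φ h1 h2 u' hpu).1
    have c3 := cross_conf g u₀ hL φ h1 h2 u' v' hpu hpv
    have s1 : g u' u₀ = 0 := (hL.1.eq u' u₀).trans hpu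
    rw [hu, hv]
    simp only [map_add, map_smul, LinearMap.add_apply, LinearMap.smul_apply, smul_eq_mul]
    rw [c1, c2, c3, hpv, s1]
    field_simp
    ring
  · rintro ⟨⟨α, hα, hc⟩, h0⟩
    refine ⟨conformal_causal g u₀ hL φ α hα hc h0, ?_⟩
    have hc' : ∀ u v, g (φ.symm u) (φ.symm v) = α⁻¹ * g u v := by
      intro u v
      have h := hc (φ.symm u) (φ.symm v)
      rw [φ.apply_symm_apply, φ.apply_symm_apply] at h
      rw [h]
      field_simp
    have h0' : 0 < g u₀ (φ.symm u₀) := by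
      have h := hc u₀ (φ.symm u₀)
      rw [φ.apply_symm_apply] at h
      have hs : g (φ u₀) u₀ = g u₀ (φ u₀) := hL.1.eq _ _
      nlinarith
    exact conformal_causal g u₀ hL φ.symm α⁻¹ (inv_pos.mpr hα) hc' h0'
end

section
/- Let φ be a causal linear automorphism of a Lorentzian vector space. If φ preserves the nullity of every future-directed null vector (i.e., g(φ(k),φ(k)) = 0 for every null k), then g(φ(u),φ(v)) = α g(u,v) for some α > 0. -/
open LinearMap (BilinForm)

variable {V : Type*} [AddCommGroup V] [Module ℝ V]

/-- a causal automorphism preserving the nullity of all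
future-directed null vectors is conformal. -/
theorem causal_null_preserving_is_conformal [FiniteDimensional ℝ V]
    (hdim : 3 ≤ Module.finrank ℝ V)
    (g : BilinForm ℝ V) (u₀ : V) (hL : IsLorentzian g u₀) (φ : V ≃ₗ[ℝ] V)
    (hφ : CausalMap g u₀ φ)
    (hnull : ∀ k, FDNull g u₀ k → g (φ k) (φ k) = 0) :
    ∃ α : ℝ, 0 < α ∧ ∀ u v, g (φ u) (φ v) = α * g u v := by
  obtain ⟨hsymm', hc, hneg⟩ := hL
  have hsym : ∀ x y : V, g x y = g y x := fun x y => hsymm'.eq x y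
  have hc0 : g u₀ u₀ ≠ 0 := ne_of_gt hc
  set c : ℝ := g u₀ u₀ with hcdef
  set α : ℝ := g (φ u₀) (φ u₀) / c with hα
  have hαc : g (φ u₀) (φ u₀) = α * c := by rw [hα, div_mul_cancel₀ _ hc0]
  -- expansion helper for g
  have gexp : ∀ (x y : V) (s : ℝ),
      g (x + s • y) (x + s • y) = g x x + 2 * s * g x y + s * s * g y y := by
    intro x y s
    simp only [map_add, map_smul, LinearMap.add_apply, LinearMap.smul_apply, smul_eq_mul,
      hsym y x]
    ring
  -- Key lemma A : for w ⊥ u₀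
  have keyA : ∀ w : V, g u₀ w = 0 →
      g (φ u₀) (φ w) = 0 ∧ g (φ w) (φ w) = α * g w w := by
    intro w hw
    by_cases hw0 : w = 0
    · subst hw0; simp
    · have hgww : g w w < 0 := hneg w hw0 hw
      have hpos : 0 < c / (-(g w w)) := div_pos hc (by linarith)
      set t := Real.sqrt (c / (-(g w w))) with htdef
      have ht2 : t * t = c / (-(g w w)) := Real.mul_self_sqrt hpos.le
      have htpos : 0 < t := Real.sqrt_pos.mpr hpos
      have ht2' : t * t * g w w = -c := by
        rw [ht2]; field_simp [ne_of_lt hgww]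
      have hnullk : ∀ s : ℝ, s * s * g w w = -c → g (φ (u₀ + s • w)) (φ (u₀ + s • w)) = 0 := by
        intro s hs
        apply hnull
        have hgu : g u₀ (u₀ + s • w) = c := by
          simp [map_add, map_smul, smul_eq_mul, hw, hcdef]
        refine ⟨?_, ?_, ?_⟩
        · rw [gexp u₀ w s, hw]; linarith
        · intro h0
          rw [h0, map_zero] at hgu
          exact hc0 hgu.symm
        · rw [hgu]; exact hc
      have hp := hnullk t ht2'
      have hm := hnullk (-t) (by nlinarith [ht2'])
      have hexp : ∀ s : ℝ, g (φ (u₀ + s • w)) (φ (u₀ + s • w))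
          = g (φ u₀) (φ u₀) + 2 * s * g (φ u₀) (φ w) + s * s * g (φ w) (φ w) := by
        intro s
        rw [map_add, map_smul]
        exact gexp (φ u₀) (φ w) s
      rw [hexp] at hp hm
      have hBw : g (φ u₀) (φ w) = 0 := by
        have h4 : (4 * t) * g (φ u₀) (φ w) = 0 := by linarith
        rcases mul_eq_zero.mp h4 with h | h
        · exact absurd h (by positivity)
        · exact h
      refine ⟨hBw, ?_⟩
      -- from hp : Bu + 2 t Bw + t² Bww = 0, Bw = 0, t² gww = -c
      rw [hBw] at hp
      have h1 : g (φ u₀) (φ u₀) + t * t * g (φ w) (φ w) = 0 := by linarith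
      have hkey : c * g (φ w) (φ w) = g (φ u₀) (φ u₀) * g w w := by
        linear_combination (g (φ w) (φ w)) * ht2' - (g w w) * h1
      rw [hα, div_mul_eq_mul_div, eq_div_iff hc0]
      linear_combination hkey
  -- Key lemma B : polarization
  have keyB : ∀ w w' : V, g u₀ w = 0 → g u₀ w' = 0 →
      g (φ w) (φ w') = α * g w w' := by
    intro w w' hw hw'
    have hsum : g u₀ (w + w') = 0 := by rw [map_add]; simp [hw, hw']
    have h1 := (keyA w hw).2
    have h2 := (keyA w' hw').2
    have h3 := (keyA (w + w') hsum).2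
    rw [map_add] at h3
    simp only [map_add, LinearMap.add_apply] at h3
    have e1 : g (φ w') (φ w) = g (φ w) (φ w') := hsym _ _
    have e2 : g w' w = g w w' := hsym _ _
    rw [e1, e2] at h3
    nlinarith [h1, h2, h3]
  have main : ∀ u v, g (φ u) (φ v) = α * g u v := by
    intro u v
    set a : ℝ := g u₀ u / c with ha
    set b : ℝ := g u₀ v / c with hb
    set w : V := u - a • u₀ with hwdef
    set w' : V := v - b • u₀ with hw'def
    have hw : g u₀ w = 0 := by
      simp [hwdef, map_sub, map_smul, smul_eq_mul, ha]
      field_simp; rw [← hcdef]; ring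
    have hw' : g u₀ w' = 0 := by
      simp [hw'def, map_sub, map_smul, smul_eq_mul, hb]
      field_simp; rw [← hcdef]; ring
    have hu : u = a • u₀ + w := by rw [hwdef]; abel
    have hv : v = b • u₀ + w' := by rw [hw'def]; abel
    have hwu : g w u₀ = 0 := by rw [hsym]; exact hw
    have hBwu : g (φ w) (φ u₀) = 0 := by rw [hsym]; exact (keyA w hw).1
    rw [hu, hv]
    simp only [map_add, map_smul, LinearMap.add_apply, LinearMap.smul_apply, smul_eq_mul]
    rw [hαc, (keyA w' hw').1, hBwu, keyB w w' hw hw', hw', hwu, ← hcdef]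
    ring

  refine ⟨α, ?_, main⟩
  have hu0ne : u₀ ≠ 0 := by
    intro h
    rw [h] at hcdef
    simp at hcdef
    exact hc0 hcdef
  have h0 : 0 ≤ g (φ u₀) (φ u₀) := (hφ u₀ ⟨hc.le, hu0ne, hc⟩).1
  have hαnn : 0 ≤ α := div_nonneg h0 hc.le
  rcases hαnn.lt_or_eq with h | h
  · exact h
  · exfalso
    have := main (φ.symm u₀) (φ.symm u₀)
    rw [← h, zero_mul] at this
    simp only [LinearEquiv.apply_symm_apply] at this
    exact hc0 this
end

section
/- Let (φ_s)_{s∈ℝ} be a one-parameter group of linear automorphisms of a Lorentzian vector space such that φ_s is causal for all s ≥ 0. If for some s₀ > 0 the map φ_{s₀} is conformal (φ_{s₀}*g = α g with α > 0), then φ_s is conformal for every s ∈ ℝ. -/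
open LinearMap (BilinForm)

variable {V : Type*} [AddCommGroup V] [Module ℝ V]

lemma gq1 (g : BilinForm ℝ V) (a : ℝ) (u w : V) :
    g (u + a • w) (u + a • w) = g u u + a * (g u w + g w u) + a ^ 2 * g w w := by
  simp [map_add, map_smul, LinearMap.add_apply, LinearMap.smul_apply, smul_eq_mul]; ring

lemma gq2 (g : BilinForm ℝ V) (a b : ℝ) (u w : V) :
    g (a • u + b • w) (a • u + b • w)
      = a ^ 2 * g u u + a * b * (g u w + g w u) + b ^ 2 * g w w := by
  simp [map_add, map_smul, LinearMap.add_apply, LinearMap.smul_apply, smul_eq_mul]; ring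

lemma gq3 (g : BilinForm ℝ V) (x y : V) :
    g (x + y) (x + y) = g x x + g x y + g y x + g y y := by
  simp [map_add, LinearMap.add_apply]; ring

lemma gker (g : BilinForm ℝ V) (a b : ℝ) (u v u₀ : V) :
    g u v = a * b * g u₀ u₀ + a * g u₀ (v - b • u₀) + b * g (u - a • u₀) u₀
      + g (u - a • u₀) (v - b • u₀) := by
  simp [map_sub, map_smul, LinearMap.sub_apply, LinearMap.smul_apply, smul_eq_mul]; ring

/-- An injective causal linear map sends future-directed timelike vectors to
timelike vectors. -/
lemma timelike_map (g : BilinForm ℝ V) (u₀ : V) (hL : IsLorentzian g u₀)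
    (B : V ≃ₗ[ℝ] V) (hB : CausalMap g u₀ B) (v : V)
    (hv : 0 < g v v) (hfv : 0 < g u₀ v) : 0 < g (B v) (B v) := by
  obtain ⟨hsymm, hc, hneg⟩ := hL
  have hFDv : FD g u₀ v := ⟨hv.le, fun h => by simp [h] at hv, hfv⟩
  obtain ⟨h1, h2, h3⟩ := hB v hFDv
  rcases h1.lt_or_eq with hlt | heq
  · exact hlt
  exfalso
  set x := B.symm u₀ with hxdef
  have hBx : B x = u₀ := B.apply_symm_apply u₀
  have hA1 : (0:ℝ) < |g v x| + |g x v| + |g x x| + 1 := by positivity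
  have hA2 : (0:ℝ) < |g u₀ x| + 1 := by positivity
  set e := min (min (g v v / (|g v x| + |g x v| + |g x x| + 1)) 1)
      (min (g u₀ v / (|g u₀ x| + 1)) (g u₀ (B v) / g u₀ u₀)) with hedef
  have he : 0 < e :=
    lt_min (lt_min (div_pos hv hA1) one_pos) (lt_min (div_pos hfv hA2) (div_pos h3 hc))
  have he1 : e ≤ 1 := le_trans (min_le_left _ _) (min_le_right _ _)
  have heA1 : e * (|g v x| + |g x v| + |g x x| + 1) ≤ g v v :=
    (le_div_iff₀ hA1).mp (le_trans (min_le_left _ _) (min_le_left _ _))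
  have heA2 : e * (|g u₀ x| + 1) ≤ g u₀ v :=
    (le_div_iff₀ hA2).mp (le_trans (min_le_right _ _) (min_le_left _ _))
  have hec : e * g u₀ u₀ ≤ g u₀ (B v) :=
    (le_div_iff₀ hc).mp (le_trans (min_le_right _ _) (min_le_right _ _))
  have hFDw : FD g u₀ (v + (-e) • x) := by
    have hquad : 0 < g (v + (-e) • x) (v + (-e) • x) := by
      rw [gq1]
      nlinarith [le_abs_self (g v x), neg_abs_le (g v x), le_abs_self (g x v),
        neg_abs_le (g x v), le_abs_self (g x x), neg_abs_le (g x x), he, he1, heA1,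
        mul_le_mul_of_nonneg_left he1 he.le, abs_nonneg (g v x), abs_nonneg (g x v),
        abs_nonneg (g x x)]
    have hlin : 0 < g u₀ (v + (-e) • x) := by
      have hexp : g u₀ (v + (-e) • x) = g u₀ v - e * g u₀ x := by
        simp [map_add, map_smul, smul_eq_mul]; ring
      rw [hexp]
      nlinarith [le_abs_self (g u₀ x), neg_abs_le (g u₀ x), he, heA2]
    exact ⟨hquad.le, fun hzz => by rw [hzz] at hlin; simp at hlin, hlin⟩
  obtain ⟨hw1, -, -⟩ := hB _ hFDw
  have himg : B (v + (-e) • x) = B v + (-e) • u₀ := by simp [hBx]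
  rw [himg, gq1] at hw1
  have hsv : g (B v) u₀ = g u₀ (B v) := hsymm.eq (B v) u₀
  nlinarith [he, h3, hc, hec, hw1, heq]

/-- A linear automorphism preserving the null cone of a Lorentzian form is conformal. -/
lemma conformal_of_null (g : BilinForm ℝ V) (u₀ : V) (hL : IsLorentzian g u₀)
    (A : V ≃ₗ[ℝ] V) (hnull : ∀ k, g k k = 0 → g (A k) (A k) = 0) :
    ∀ u v, g (A u) (A v) = (g (A u₀) (A u₀) / g u₀ u₀) * g u v := by
  obtain ⟨hsymm, hc, hneg⟩ := hL
  set α := g (A u₀) (A u₀) / g u₀ u₀ with hα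
  have hAsymm : ∀ x y : V, g (A x) (A y) = g (A y) (A x) := fun x y => hsymm.eq _ _
  have step1 : ∀ w, g u₀ w = 0 → g (A u₀) (A w) = 0 ∧ g (A w) (A w) = α * g w w := by
    intro w hw
    by_cases hw0 : w = 0
    · simp [hw0]
    have hd : 0 < -(g w w) := by linarith [hneg w hw0 hw]
    set a := Real.sqrt (-(g w w)) with ha
    set b := Real.sqrt (g u₀ u₀) with hb
    have ha2 : a ^ 2 = -(g w w) := Real.sq_sqrt hd.le
    have hb2 : b ^ 2 = g u₀ u₀ := Real.sq_sqrt hc.le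
    have hab : 0 < a * b := mul_pos (Real.sqrt_pos.mpr hd) (Real.sqrt_pos.mpr hc)
    have hwu : g w u₀ = 0 := (show g w u₀ = g u₀ w from hsymm.eq w u₀).trans hw
    have hk1 : g (a • u₀ + b • w) (a • u₀ + b • w) = 0 := by
      rw [gq2, hw, hwu, ha2, hb2]; ring
    have hk2 : g (a • u₀ + (-b) • w) (a • u₀ + (-b) • w) = 0 := by
      rw [gq2, hw, hwu, neg_sq, ha2, hb2]; ring
    have e1 := hnull _ hk1
    have e2 := hnull _ hk2
    have himg1 : A (a • u₀ + b • w) = a • A u₀ + b • A w := by simp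
    have himg2 : A (a • u₀ + (-b) • w) = a • A u₀ + (-b) • A w := by simp
    rw [himg1, gq2] at e1
    rw [himg2, gq2] at e2
    have hs := hAsymm w u₀
    have h1 : g (A u₀) (A w) = 0 := by
      have h4 : (4 * (a * b)) * g (A u₀) (A w) = 0 := by
        linear_combination e1 - e2 - 2 * (a * b) * hs
      rcases mul_eq_zero.mp h4 with h | h
      · exact absurd h (mul_pos (by norm_num) hab).ne'
      · exact h
    refine ⟨h1, ?_⟩
    have hbase : a ^ 2 * g (A u₀) (A u₀) + b ^ 2 * g (A w) (A w) = 0 := by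
      have hq0 : g (A w) (A u₀) = 0 := by rw [hs]; exact h1
      linear_combination e1 - a * b * h1 - a * b * hq0
    rw [ha2, hb2] at hbase
    rw [hα]
    field_simp
    linarith [hbase]
  have step2 : ∀ w w', g u₀ w = 0 → g u₀ w' = 0 → g (A w) (A w') = α * g w w' := by
    intro w w' hw hw'
    have hsum : g u₀ (w + w') = 0 := by rw [map_add, hw, hw']; ring
    have e1 := (step1 w hw).2
    have e2 := (step1 w' hw').2
    have e3 := (step1 _ hsum).2
    have himg : A (w + w') = A w + A w' := by simp
    rw [himg, gq3] at e3
    rw [gq3] at e3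
    have hs1 := hAsymm w w'
    have hs2 : g w w' = g w' w := hsymm.eq w w'
    -- e3 : hww + h w w' + h w' w + hw'w' = α*(gww + gww' + gw'w + gw'w')
    linear_combination (e3 - e1 - e2 + hs1) / 2 - α / 2 * hs2
  intro u v
  set p := g u₀ u / g u₀ u₀ with hp
  set q := g u₀ v / g u₀ u₀ with hq
  have hwu : g u₀ (u - p • u₀) = 0 := by
    rw [map_sub, map_smul, smul_eq_mul, hp]; field_simp; ring
  have hwv : g u₀ (v - q • u₀) = 0 := by
    rw [map_sub, map_smul, smul_eq_mul, hq]; field_simp; ring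
  have h1 := (step1 _ hwv).1
  have h2 : g (A (u - p • u₀)) (A u₀) = 0 := by
    rw [hAsymm]; exact (step1 _ hwu).1
  have h3 := step2 _ _ hwu hwv
  have hH : g (A u₀) (A u₀) = α * g u₀ u₀ := by rw [hα]; field_simp
  have himg1 : A (u - p • u₀) = A u - p • A u₀ := by simp
  have himg2 : A (v - q • u₀) = A v - q • A u₀ := by simp
  have keyh := gker g p q (A u) (A v) (A u₀)
  rw [← himg1, ← himg2] at keyh
  have keyg := gker g p q u v u₀
  have hgu : g (u - p • u₀) u₀ = 0 :=
    (show g (u - p • u₀) u₀ = g u₀ (u - p • u₀) from hsymm.eq _ _).trans hwu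
  rw [keyh, h1, h2, h3, hH, keyg, hwv, hgu]
  ring

/-- if a causal one-parameter group contains a conformal map at some
`s₀ > 0` then all its members are conformal. -/
theorem one_parameter_conformal_propagation [FiniteDimensional ℝ V]
    (hdim : 2 ≤ Module.finrank ℝ V)
    (g : BilinForm ℝ V) (u₀ : V) (hL : IsLorentzian g u₀)
    (φ : ℝ → V ≃ₗ[ℝ] V)
    (hgrp : ∀ s t : ℝ, ∀ v : V, φ (s + t) v = φ s (φ t v))
    (h0 : ∀ v : V, φ 0 v = v)
    (hcausal : ∀ s, 0 ≤ s → CausalMap g u₀ (φ s))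
    (s₀ : ℝ) (hs₀ : 0 < s₀)
    (hconf : ∃ α : ℝ, 0 < α ∧ ∀ u v, g (φ s₀ u) (φ s₀ v) = α * g u v) :
    ∀ s : ℝ, ∃ α : ℝ, 0 < α ∧ ∀ u v, g (φ s u) (φ s v) = α * g u v := by
  obtain ⟨α, hα, hconfα⟩ := hconf
  obtain ⟨hsymm, hc, hneg⟩ := hL
  -- Step B: members of the semigroup up to time s₀ preserve the null cone.
  have hnullp : ∀ r, 0 ≤ r → r ≤ s₀ → ∀ k : V, g k k = 0 → g (φ r k) (φ r k) = 0 := by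
    intro r hr0 hr1 k hk
    by_cases hk0 : k = 0
    · simp [hk0]
    have main : ∀ m : V, g m m = 0 → m ≠ 0 → 0 < g u₀ m → g (φ r m) (φ r m) = 0 := by
      intro m hm hm0 hmu
      obtain ⟨hm1, hm2, hm3⟩ := hcausal r hr0 m ⟨hm.ge, hm0, hmu⟩
      rcases hm1.lt_or_eq with hlt | heq
      · exfalso
        have hpos := timelike_map g u₀ ⟨hsymm, hc, hneg⟩ (φ (s₀ - r))
          (hcausal _ (by linarith)) _ hlt hm3
        have hcomp : φ (s₀ - r) (φ r m) = φ s₀ m := by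
          rw [← hgrp]; norm_num
        rw [hcomp, hconfα, hm, mul_zero] at hpos
        exact lt_irrefl 0 hpos
      · exact heq.symm
    rcases lt_trichotomy (g u₀ k) 0 with hlt | heq | hgt
    · have hmk : g (-k) (-k) = 0 := by
        simp [map_neg, LinearMap.neg_apply, hk]
      have := main (-k) hmk (neg_ne_zero.mpr hk0)
        (by rw [map_neg]; linarith)
      simpa [map_neg, LinearMap.neg_apply] using this
    · exact absurd hk (ne_of_lt (hneg k hk0 heq))
    · exact main k hk hk0 hgt
  -- Step C: members up to time s₀ are conformal.
  have key : ∀ r, 0 ≤ r → r ≤ s₀ → ∃ β : ℝ, 0 < β ∧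
      ∀ u v, g (φ r u) (φ r v) = β * g u v := by
    intro r hr0 hr1
    have hpos : 0 < g (φ r u₀) (φ r u₀) :=
      timelike_map g u₀ ⟨hsymm, hc, hneg⟩ (φ r) (hcausal r hr0) u₀ hc hc
    exact ⟨_, div_pos hpos hc,
      conformal_of_null g u₀ ⟨hsymm, hc, hneg⟩ (φ r) (hnullp r hr0 hr1)⟩
  -- Step D: integer powers.
  have hz : ∀ n : ℤ, ∀ u v : V,
      g (φ ((n : ℝ) * s₀) u) (φ ((n : ℝ) * s₀) v) = α ^ n * g u v := by
    intro n
    induction n using Int.induction_on with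
    | zero => intro u v; norm_num [h0]
    | succ i ih =>
      intro u v
      have harg : (((i : ℤ) + 1 : ℤ) : ℝ) * s₀ = s₀ + ((i : ℤ) : ℝ) * s₀ := by
        push_cast; ring
      rw [harg, hgrp, hgrp, hconfα, ih, zpow_add_one₀ hα.ne']
      ring
    | pred i ih =>
      intro u v
      have harg : ((-(i : ℤ) : ℤ) : ℝ) * s₀ = s₀ + ((-(i : ℤ) - 1 : ℤ) : ℝ) * s₀ := by
        push_cast; ring
      have := ih u v
      rw [harg, hgrp, hgrp, hconfα] at this
      have hz1 : α ^ (-(i:ℤ) - 1) = α ^ (-(i:ℤ)) / α := zpow_sub_one₀ hα.ne' _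
      rw [hz1, div_mul_eq_mul_div, eq_div_iff hα.ne']
      linear_combination this
  -- Conclusion
  intro s
  set n : ℤ := ⌊s / s₀⌋ with hn
  have hfl : (n : ℝ) ≤ s / s₀ := Int.floor_le _
  have hfl2 : s / s₀ < (n : ℝ) + 1 := Int.lt_floor_add_one _
  have hr0 : 0 ≤ s - (n : ℝ) * s₀ := by
    have := (le_div_iff₀ hs₀).mp hfl
    linarith
  have hr1 : s - (n : ℝ) * s₀ ≤ s₀ := by
    have := (div_lt_iff₀ hs₀).mp hfl2
    nlinarith
  obtain ⟨β, hβ, hβc⟩ := key _ hr0 hr1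
  refine ⟨β * α ^ n, mul_pos hβ (zpow_pos hα n), fun u v => ?_⟩
  have hdecomp : ∀ w : V, φ s w = φ (s - (n : ℝ) * s₀) (φ ((n : ℝ) * s₀) w) := by
    intro w
    have h := hgrp (s - (n : ℝ) * s₀) ((n : ℝ) * s₀) w
    rw [show s - (n : ℝ) * s₀ + (n : ℝ) * s₀ = s from by ring] at h
    exact h
  rw [hdecomp u, hdecomp v, hβc, hz n u v]
  ring
end

section
/- Let (φ_s) be a smooth one-parameter group of linear automorphisms of a Lorentzian vector space with generator A (so dφ_s/ds|_{s=0} = A), such that φ_s is causal for all s ≥ 0. Then there exists α ∈ ℝ such that the symmetric bilinear form L(u,v) := g(Au,v) + g(u,Av) − α g(u,v) satisfies L(u,v) ≥ 0 for all future-directed causal vectors u, v. -/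
open LinearMap (BilinForm)

variable {V : Type*} [AddCommGroup V] [Module ℝ V]

section Helpers
variable {W : Type*} [NormedAddCommGroup W] [NormedSpace ℝ W] [FiniteDimensional ℝ W]

noncomputable def bilinCLM (g : BilinForm ℝ W) : W →L[ℝ] W →L[ℝ] ℝ :=
  LinearMap.toContinuousLinearMap
    { toFun := fun w => LinearMap.toContinuousLinearMap (g w)
      map_add' := by intro a b; ext z; simp
      map_smul' := by intro c a; ext z; simp }

@[simp] lemma bilinCLM_apply (g : BilinForm ℝ W) (u v : W) : bilinCLM g u v = g u v := rfl

lemma continuous_bilin (g : BilinForm ℝ W) : Continuous fun p : W × W => g p.1 p.2 := by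
  have h : Continuous fun p : (W →L[ℝ] ℝ) × W => p.1 p.2 := isBoundedBilinearMap_apply.continuous
  have : Continuous fun p : W × W => ((bilinCLM g p.1 : W →L[ℝ] ℝ), p.2) :=
    ((bilinCLM g).continuous.comp continuous_fst).prodMk continuous_snd
  exact h.comp this

/-- A bound `g(Aw,w)+g(w,Aw) ≤ C ⬝ (−g(w,w))` on the spacelike hyperplane. -/
lemma exists_C (g : BilinForm ℝ W) (u₀ : W) (hneg : ∀ v, v ≠ 0 → g u₀ v = 0 → g v v < 0)
    (A : W →ₗ[ℝ] W) :
    ∃ C : ℝ, ∀ w, g u₀ w = 0 → g (A w) w + g w (A w) ≤ C * (-(g w w)) := by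
  set S : W → ℝ := fun w => g (A w) w + g w (A w) with hS
  have hAcont : Continuous A := A.continuous_of_finiteDimensional
  have hgcont : ∀ B : W →ₗ[ℝ] W, Continuous fun w => g (B w) w := fun B =>
    (continuous_bilin g).comp ((B.continuous_of_finiteDimensional).prodMk continuous_id)
  have hScont : Continuous S := by
    have h1 : Continuous fun w => g (A w) w := hgcont A
    have h2 : Continuous fun w => g w (A w) :=
      (continuous_bilin g).comp (continuous_id.prodMk hAcont)
    exact h1.add h2
  have hqcont : Continuous fun w => -(g w w) :=
    ((continuous_bilin g).comp (continuous_id.prodMk continuous_id)).neg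
  have hu0cont : Continuous fun w => g u₀ w := (g u₀).continuous_of_finiteDimensional
  set K : Set W := {w | g u₀ w = 0 ∧ ‖w‖ = 1} with hK
  have hKclosed : IsClosed K :=
    ((isClosed_singleton.preimage hu0cont).inter (isClosed_singleton.preimage continuous_norm))
  have hKcpt : IsCompact K := by
    apply Metric.isCompact_of_isClosed_isBounded hKclosed
    have : K ⊆ Metric.closedBall 0 1 := by
      intro w hw; simp [Metric.mem_closedBall, dist_eq_norm, hw.2.le]
    exact Bornology.IsBounded.subset (Metric.isBounded_closedBall) this
  -- scaling step
  have hscale : ∀ (C : ℝ), (∀ w ∈ K, S w ≤ C * (-(g w w))) →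
      ∀ w, g u₀ w = 0 → S w ≤ C * (-(g w w)) := by
    intro C hC w hw
    rcases eq_or_ne w 0 with rfl | hw0
    · simp [hS]
    · have hn : ‖w‖ ≠ 0 := norm_ne_zero_iff.mpr hw0
      set w' : W := ‖w‖⁻¹ • w with hw'
      have hw'K : w' ∈ K := by
        constructor
        · simp [hw', map_smul, hw, smul_eq_mul]
        · simp [hw', norm_smul, abs_of_nonneg (inv_nonneg.mpr (norm_nonneg w)),
            inv_mul_cancel₀ hn]
      have := hC w' hw'K
      have hSw' : S w' = (‖w‖⁻¹)^2 * S w := by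
        simp [hS, hw', map_smul, smul_eq_mul]; ring
      have hgw' : g w' w' = (‖w‖⁻¹)^2 * g w w := by
        simp [hw', map_smul, smul_eq_mul]; ring
      rw [hSw', hgw'] at this
      have hp : (0:ℝ) < (‖w‖⁻¹)^2 := by positivity
      by_contra hcon
      push_neg at hcon
      have key := mul_lt_mul_of_pos_left hcon hp
      linarith [this, key]
  rcases Set.eq_empty_or_nonempty K with hKe | hKne
  · refine ⟨0, hscale 0 ?_⟩
    intro w hw; exact absurd hw (by simp [hKe])
  · set F : W → ℝ := fun w => S w / (-(g w w)) with hF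
    have hq : ∀ w ∈ K, 0 < -(g w w) := by
      intro w hw
      have hw1 : g u₀ w = 0 := hw.1
      have hw2 : ‖w‖ = 1 := hw.2
      have : g w w < 0 := hneg w (by intro h; rw [h] at hw2; simp at hw2) hw1
      linarith
    have hFcont : ContinuousOn F K :=
      (hScont.continuousOn).div (hqcont.continuousOn) (fun w hw => (hq w hw).ne')
    obtain ⟨z, hzK, hz⟩ := hKcpt.exists_isMaxOn hKne hFcont
    refine ⟨F z, hscale (F z) ?_⟩
    intro w hw
    have hzw : F w ≤ F z := hz hw
    have hqw := hq w hw
    calc S w = F w * (-(g w w)) := (div_mul_cancel₀ (S w) hqw.ne').symm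
    _ ≤ F z * (-(g w w)) := mul_le_mul_of_nonneg_right hzw hqw.le


end Helpers


set_option maxHeartbeats 1000000 in
/-- the generator `A` of a smooth causal one-parameter group satisfies
`£_ξ g − α g ∈ DP⁺₂`: there is `α` with `g(Au,v)+g(u,Av)−α g(u,v) ≥ 0` on
future-directed causal pairs. -/
theorem generator_deformation_causal
    {V : Type*} [NormedAddCommGroup V] [NormedSpace ℝ V] [FiniteDimensional ℝ V]
    (g : BilinForm ℝ V) (u₀ : V) (hL : IsLorentzian g u₀)
    (φ : ℝ → V ≃ₗ[ℝ] V)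
    (hgrp : ∀ s t : ℝ, ∀ v : V, φ (s + t) v = φ s (φ t v))
    (h0 : ∀ v : V, φ 0 v = v)
    (hsmooth : ∀ v : V, ContDiff ℝ (⊤ : ℕ∞) fun s => φ s v)
    (A : V →ₗ[ℝ] V)
    (hA : ∀ v : V, HasDerivAt (fun s => φ s v) (A v) 0)
    (hcausal : ∀ s, 0 ≤ s → CausalMap g u₀ (φ s)) :
    ∃ α : ℝ, ∀ u v, FD g u₀ u → FD g u₀ v →
      0 ≤ g (A u) v + g u (A v) - α * g u v := by
  obtain ⟨hsymm', hβ, hneg⟩ := hL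
  have hsym : ∀ a b : V, g a b = g b a := fun a b => hsymm'.eq a b
  obtain ⟨C, hC⟩ := exists_C g u₀ hneg A
  set β : ℝ := g u₀ u₀ with hβdef
  set α : ℝ := min (-C) ((g (A u₀) u₀ + g u₀ (A u₀)) / β) with hαdef
  have hαC : α ≤ -C := min_le_left _ _
  refine ⟨α, ?_⟩
  -- Step 1: the deformation is nonnegative on null FD diagonal pairs.
  have diag : ∀ k : V, FD g u₀ k → g k k = 0 → 0 ≤ g (A k) k + g k (A k) := by
    intro k hk hkk
    set G := bilinCLM g with hG
    have h1 : HasDerivAt (fun s => φ s k) (A k) 0 := hA k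
    have hc : HasDerivAt (fun s => G (φ s k)) (G (A k)) 0 := by
      have := G.hasFDerivAt.comp_hasDerivAt (0:ℝ) h1
      exact this
    have hn : HasDerivAt (fun s => g (φ s k) (φ s k))
        (g (A k) k + g k (A k)) 0 := by
      have h2 := hc.clm_apply h1
      simp only [h0, ContinuousLinearMap.add_apply] at h2
      have he : ∀ s : ℝ, G (φ s k) (φ s k) = g (φ s k) (φ s k) := fun s => rfl
      exact h2
    -- derivative is a right-limit of nonnegative slopes
    have hslope := hasDerivAt_iff_tendsto_slope.mp hn
    have hmono : (nhdsWithin (0:ℝ) (Set.Ioi 0)) ≤ (nhdsWithin (0:ℝ) {(0:ℝ)}ᶜ) :=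
      nhdsWithin_mono 0 (fun s hs => ne_of_gt hs)
    have hslope' := hslope.mono_left hmono
    have hev : ∀ᶠ s in nhdsWithin (0:ℝ) (Set.Ioi 0),
        0 ≤ slope (fun s => g (φ s k) (φ s k)) 0 s := by
      filter_upwards [self_mem_nhdsWithin] with s hs
      have hs' : (0:ℝ) < s := hs
      have hFD : FD g u₀ (φ s k) := hcausal s hs'.le k hk
      have hnn : 0 ≤ g (φ s k) (φ s k) := hFD.1
      have : slope (fun s => g (φ s k) (φ s k)) 0 s
          = (g (φ s k) (φ s k)) / s := by
        simp [slope, h0, hkk, div_eq_inv_mul]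
      rw [this]
      positivity
    exact ge_of_tendsto hslope' hev
  -- -g is nonnegative on the orthogonal hyperplane
  have qnn : ∀ w : V, g u₀ w = 0 → g w w ≤ 0 := by
    intro w hw
    rcases eq_or_ne w 0 with rfl | hw0
    · simp
    · exact (hneg w hw0 hw).le
  -- Step 2: pairs of normalized null vectors
  have pairN : ∀ k l : V, g u₀ k = β → g k k = 0 → g u₀ l = β → g l l = 0 →
      0 ≤ g k l ∧ 0 ≤ g (A k) l + g k (A l) + C * g k l := by
    intro k l hk0 hkk hl0 hll
    have hFD : ∀ m : V, g u₀ m = β → g m m = 0 → FD g u₀ m := by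
      intro m hm0 hmm
      refine ⟨hmm.ge, ?_, by rw [hm0]; exact hβ⟩
      intro h
      rw [h] at hm0; simp at hm0
      exact hβ.ne' hm0.symm
    have hkl : g u₀ (k - l) = 0 := by rw [map_sub, hk0, hl0]; ring
    have hexp : g (k - l) (k - l) = -(2 * g k l) := by
      simp only [map_sub, LinearMap.sub_apply]
      rw [hkk, hll, hsym l k]; ring
    have h1 : 0 ≤ g k l := by
      have := qnn (k - l) hkl
      rw [hexp] at this; linarith
    refine ⟨h1, ?_⟩
    have hCkl := hC (k - l) hkl
    have hexpS : g (A (k - l)) (k - l) + g (k - l) (A (k - l)) =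
        (g (A k) k + g k (A k)) + (g (A l) l + g l (A l))
          - 2 * (g (A k) l + g k (A l)) := by
      simp only [map_sub, LinearMap.sub_apply]
      rw [hsym l (A k), hsym (A l) k]
      ring
    rw [hexpS, hexp] at hCkl
    have h2 := diag k (hFD k hk0 hkk) hkk
    have h3 := diag l (hFD l hl0 hll) hll
    linarith
  -- Step 3: key claim for normalized causal vectors
  have key : ∀ u v : V, g u₀ u = β → 0 ≤ g u u → g u₀ v = β → 0 ≤ g v v →
      0 ≤ g (A u) v + g u (A v) - α * g u v := by
    intro u v hu0 huu hv0 hvv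
    by_cases hW : ∃ e : V, g u₀ e = 0 ∧ e ≠ 0
    · -- decomposition into null vectors
      have decomp : ∀ w : V, g u₀ w = β → 0 ≤ g w w →
          ∃ (a b : ℝ) (k l : V), 0 ≤ a ∧ 0 ≤ b ∧ w = a • k + b • l ∧
            g u₀ k = β ∧ g k k = 0 ∧ g u₀ l = β ∧ g l l = 0 := by
        intro w hw0 hww
        have hx0 : g u₀ (w - u₀) = 0 := by
          rw [map_sub, hw0]; ring
        -- find e with g u₀ e = 0, g e e = -β, and w - u₀ = c • e with 0 ≤ c ≤ 1
        have he : ∃ (c : ℝ) (e : V), 0 ≤ c ∧ c ≤ 1 ∧ g u₀ e = 0 ∧ g e e = -β ∧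
            w - u₀ = c • e := by
          rcases eq_or_ne (w - u₀) 0 with hx | hx
          · obtain ⟨e₀, he₀, he₀ne⟩ := hW
            have hq₀ : 0 < -(g e₀ e₀) := by
              have := hneg e₀ he₀ne he₀; linarith
            refine ⟨0, (Real.sqrt (β / (-(g e₀ e₀)))) • e₀, le_refl 0, zero_le_one, ?_, ?_, ?_⟩
            · simp [map_smul, he₀, smul_eq_mul]
            · have he00 : g e₀ e₀ ≠ 0 := by intro h; rw [h] at hq₀; simp at hq₀
              have hsq : Real.sqrt (β / (-(g e₀ e₀))) ^ 2 = β / (-(g e₀ e₀)) :=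
                Real.sq_sqrt (by positivity)
              simp only [map_smul, LinearMap.smul_apply, smul_eq_mul]
              rw [show Real.sqrt (β / (-(g e₀ e₀))) * (Real.sqrt (β / (-(g e₀ e₀))) * g e₀ e₀)
                  = Real.sqrt (β / (-(g e₀ e₀))) ^ 2 * g e₀ e₀ by ring, hsq]
              field_simp
            · rw [hx, zero_smul]
          · set x := w - u₀ with hxdef
            have hqx : 0 < -(g x x) := by
              have := hneg x hx hx0; linarith
            have hqxβ : -(g x x) ≤ β := by
              have hexpw : g w w = β + g x x := by
                have hw' : w = u₀ + x := by rw [hxdef]; abel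
                rw [hw']
                simp only [map_add, LinearMap.add_apply]
                rw [hsym x u₀, hx0]; ring
              rw [hexpw] at hww; linarith
            set c := Real.sqrt (-(g x x) / β) with hcdef
            have hc0 : 0 < c := Real.sqrt_pos.mpr (by positivity)
            have hc2 : c ^ 2 = -(g x x) / β := Real.sq_sqrt (by positivity)
            have hc1 : c ≤ 1 := by
              rw [hcdef]
              rw [show (1:ℝ) = Real.sqrt 1 by simp]
              apply Real.sqrt_le_sqrt
              rw [div_le_one hβ]; exact hqxβ
            refine ⟨c, c⁻¹ • x, hc0.le, hc1, ?_, ?_, ?_⟩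
            · simp [map_smul, hx0]
            · have hxx0 : g x x ≠ 0 := by intro h; rw [h] at hqx; simp at hqx
              have hr : g (c⁻¹ • x) (c⁻¹ • x) = (g x x) / c ^ 2 := by
                simp only [map_smul, LinearMap.smul_apply, smul_eq_mul]
                rw [eq_div_iff (pow_ne_zero 2 hc0.ne')]
                have h1 : c⁻¹ * c = 1 := inv_mul_cancel₀ hc0.ne'
                linear_combination (g x x * (c⁻¹ * c + 1)) * h1
              have hne : -(g x x) / β ≠ 0 := div_ne_zero (by linarith) hβ.ne'
              rw [hr, hc2, div_eq_iff hne]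
              field_simp
            · rw [smul_inv_smul₀ hc0.ne']
        obtain ⟨c, e, hc0, hc1, he0, hee, hxe⟩ := he
        refine ⟨(1 + c)/2, (1 - c)/2, u₀ + e, u₀ - e, by linarith, by linarith, ?_, ?_, ?_, ?_, ?_⟩
        · rw [show w = u₀ + c • e from by rw [← hxe]; abel]
          module
        · rw [map_add, he0]; ring
        · simp only [map_add, LinearMap.add_apply]
          rw [he0, hsym e u₀, he0, hee]; ring
        · rw [map_sub, he0]; ring
        · simp only [map_sub, LinearMap.sub_apply]
          rw [he0, hsym e u₀, he0, hee]; ring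
      obtain ⟨a, b, k₁, k₂, ha, hb, hud, hk₁0, hk₁, hk₂0, hk₂⟩ := decomp u hu0 huu
      obtain ⟨a', b', l₁, l₂, ha', hb', hvd, hl₁0, hl₁, hl₂0, hl₂⟩ := decomp v hv0 hvv
      obtain ⟨g11, s11⟩ := pairN k₁ l₁ hk₁0 hk₁ hl₁0 hl₁
      obtain ⟨g12, s12⟩ := pairN k₁ l₂ hk₁0 hk₁ hl₂0 hl₂
      obtain ⟨g21, s21⟩ := pairN k₂ l₁ hk₂0 hk₂ hl₁0 hl₁
      obtain ⟨g22, s22⟩ := pairN k₂ l₂ hk₂0 hk₂ hl₂0 hl₂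
      have hguv : g u v = a*a' * g k₁ l₁ + a*b' * g k₁ l₂ + b*a' * g k₂ l₁ + b*b' * g k₂ l₂ := by
        rw [hud, hvd]
        simp only [map_add, map_smul, LinearMap.add_apply, LinearMap.smul_apply, smul_eq_mul]
        ring
      have hSuv : g (A u) v + g u (A v) =
          a*a' * (g (A k₁) l₁ + g k₁ (A l₁)) + a*b' * (g (A k₁) l₂ + g k₁ (A l₂))
          + b*a' * (g (A k₂) l₁ + g k₂ (A l₁)) + b*b' * (g (A k₂) l₂ + g k₂ (A l₂)) := by
        rw [hud, hvd]
        simp only [map_add, map_smul, LinearMap.add_apply, LinearMap.smul_apply, smul_eq_mul]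
        ring
      have t11 : 0 ≤ (a*a') * (g (A k₁) l₁ + g k₁ (A l₁) + C * g k₁ l₁) :=
        mul_nonneg (mul_nonneg ha ha') s11
      have t12 : 0 ≤ (a*b') * (g (A k₁) l₂ + g k₁ (A l₂) + C * g k₁ l₂) :=
        mul_nonneg (mul_nonneg ha hb') s12
      have t21 : 0 ≤ (b*a') * (g (A k₂) l₁ + g k₂ (A l₁) + C * g k₂ l₁) :=
        mul_nonneg (mul_nonneg hb ha') s21
      have t22 : 0 ≤ (b*b') * (g (A k₂) l₂ + g k₂ (A l₂) + C * g k₂ l₂) :=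
        mul_nonneg (mul_nonneg hb hb') s22
      have hguv0 : 0 ≤ g u v := by
        rw [hguv]
        have := mul_nonneg (mul_nonneg ha ha') g11
        have := mul_nonneg (mul_nonneg ha hb') g12
        have := mul_nonneg (mul_nonneg hb ha') g21
        have := mul_nonneg (mul_nonneg hb hb') g22
        linarith
      have hα' : 0 ≤ (-C - α) * g u v := mul_nonneg (by linarith) hguv0
      have hCguv : C * g u v = C * (a*a' * g k₁ l₁ + a*b' * g k₁ l₂
          + b*a' * g k₂ l₁ + b*b' * g k₂ l₂) := by rw [hguv]
      linarith [t11, t12, t21, t22, hα', hSuv, hCguv]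
    · -- degenerate case: the orthogonal complement is trivial, so u = v = u₀
      push_neg at hW
      have huu₀ : u = u₀ := by
        have hx0 : g u₀ (u - u₀) = 0 := by
          rw [map_sub, hu0]; ring
        have := hW (u - u₀) hx0
        rwa [sub_eq_zero] at this
      have hvu₀ : v = u₀ := by
        have hx0 : g u₀ (v - u₀) = 0 := by
          rw [map_sub, hv0]; ring
        have := hW (v - u₀) hx0
        rwa [sub_eq_zero] at this
      rw [huu₀, hvu₀]
      have hα2 : α ≤ (g (A u₀) u₀ + g u₀ (A u₀)) / β := min_le_right _ _
      rw [le_div_iff₀ hβ] at hα2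
      have hgu : g u₀ u₀ = β := rfl
      rw [hgu]
      linarith [hα2]
  -- Step 4: reduce the general case to the normalized one
  intro u v hu hv
  have hcu : 0 < g u₀ u := hu.2.2
  have hcv : 0 < g u₀ v := hv.2.2
  set cu : ℝ := β / g u₀ u with hcudef
  set cv : ℝ := β / g u₀ v with hcvdef
  have hcu0 : 0 < cu := by positivity
  have hcv0 : 0 < cv := by positivity
  have h1 : g u₀ (cu • u) = β := by
    rw [map_smul, smul_eq_mul, hcudef]; field_simp
  have h2 : 0 ≤ g (cu • u) (cu • u) := by
    simp only [map_smul, LinearMap.smul_apply, smul_eq_mul]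
    have := hu.1
    positivity
  have h3 : g u₀ (cv • v) = β := by
    rw [map_smul, smul_eq_mul, hcvdef]; field_simp
  have h4 : 0 ≤ g (cv • v) (cv • v) := by
    simp only [map_smul, LinearMap.smul_apply, smul_eq_mul]
    have := hv.1
    positivity
  have hkey := key (cu • u) (cv • v) h1 h2 h3 h4
  simp only [map_smul, LinearMap.smul_apply, smul_eq_mul] at hkey
  have hpos : 0 < cu * cv := mul_pos hcu0 hcv0
  nlinarith [hkey, hpos]
end
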